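/- arXiv:2112.00257 — 2 statements merged into one kernel-verified Lean document; each statement's English description precedes it below -/
import Mathlib

section
/- For every real number α > 0 and every natural number n ≥ 1, the n-th harmonic number H_n = Σ_{k=1}^n 1/k satisfies H_n = (1/2) Σ_{k=1}^n ( ∫_{-∞}^{∞} e^{-α|x|} sech^{k+1}(x) dx + ((α - (k-1))/k) · ∫_{-∞}^{∞} e^{-(α+1)|x|} sech^{k}(x) dx ). -/
/-! On `(0, ∞)` the integrand of the `k`-th summand is the derivative of
`-(1/k) e^{-(α+1)x} sech^k x` (use `e^{-αx} = e^{-(α+1)x}(cosh x + sinh x)`), which vanishes at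
infinity and equals `-1/k` at `0`; by evenness the integral over `ℝ` is twice that over `(0, ∞)`,
so each summand equals `2/k`. -/

open MeasureTheory Real Set Filter

lemma integrableOn_exp_mul_inv_cosh_pow_Ioi {b : ℝ} (hb : 0 < b) (j : ℕ) :
    IntegrableOn (fun x : ℝ => exp (-b * x) * (1 / cosh x) ^ j) (Ioi 0) := by
  refine (exp_neg_integrableOn_Ioi 0 hb).mono' (by fun_prop) (ae_of_all _ fun x => ?_)
  have hsech_nonneg : 0 ≤ 1 / cosh x := by positivity
  have hsech_le_one : 1 / cosh x ≤ 1 := (div_le_one (cosh_pos x)).mpr (one_le_cosh x)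
  rw [norm_mul, norm_pow, norm_of_nonneg (exp_pos _).le, norm_of_nonneg hsech_nonneg]
  exact mul_le_of_le_one_right (exp_pos _).le (pow_le_one₀ hsech_nonneg hsech_le_one)

lemma integral_exp_abs_mul_inv_cosh_pow (b : ℝ) (j : ℕ) :
    ∫ x : ℝ, exp (-b * |x|) * (1 / cosh x) ^ j =
      2 * ∫ x in Ioi 0, exp (-b * x) * (1 / cosh x) ^ j := by
  rw [← integral_comp_abs (f := fun x => exp (-b * x) * (1 / cosh x) ^ j)]
  simp_rw [cosh_abs]

lemma hasDerivAt_exp_mul_inv_cosh_pow (α : ℝ) (m : ℕ) (x : ℝ) :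
    HasDerivAt (fun x => -(1 / (m + 1)) * (exp (-(α + 1) * x) / cosh x ^ (m + 1)))
      (exp (-α * x) * (1 / cosh x) ^ (m + 2) +
        (α - m) / (m + 1) * (exp (-(α + 1) * x) * (1 / cosh x) ^ (m + 1))) x := by
  have hexp : HasDerivAt (fun x => exp (-(α + 1) * x)) (exp (-(α + 1) * x) * (-(α + 1))) x := by
    simpa using ((hasDerivAt_id x).const_mul (-(α + 1))).exp
  have hpow : HasDerivAt (fun x => cosh x ^ (m + 1)) ((m + 1 : ℕ) * cosh x ^ m * sinh x) x := by
    simpa using (hasDerivAt_cosh x).fun_pow (m + 1)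
  refine ((hexp.div hpow (by positivity)).const_mul _).congr_deriv ?_
  have hexp_shift : exp (-α * x) = exp (-(α + 1) * x) * (cosh x + sinh x) := by
    rw [cosh_add_sinh, ← exp_add]
    ring_nf
  have hcosh : cosh x ≠ 0 := (cosh_pos x).ne'
  rw [hexp_shift]
  push_cast
  simp only [one_div, inv_pow, pow_succ]
  field_simp
  ring

lemma tendsto_exp_mul_inv_cosh_pow_atTop {α : ℝ} (hα : -1 < α) (m : ℕ) :
    Tendsto (fun x => -(1 / (m + 1 : ℝ)) * (exp (-(α + 1) * x) / cosh x ^ (m + 1)))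
      atTop (nhds 0) := by
  have hexp : Tendsto (fun x => (1 / (m + 1 : ℝ)) * exp (-(α + 1) * x)) atTop (nhds 0) := by
    simpa using (tendsto_exp_atBot.comp
      (tendsto_id.const_mul_atTop_of_neg (by linarith : -(α + 1) < 0))).const_mul (1 / (m + 1 : ℝ))
  refine squeeze_zero_norm (fun x => ?_) hexp
  rw [norm_mul, norm_neg, norm_of_nonneg (by positivity), norm_of_nonneg (by positivity)]
  gcongr
  exact div_le_self (exp_pos _).le (one_le_pow₀ (one_le_cosh x))

lemma integral_Ioi_exp_mul_inv_cosh_pow_combination {α : ℝ} (hα : 0 < α) (m : ℕ) :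
    ∫ x in Ioi 0, (exp (-α * x) * (1 / cosh x) ^ (m + 2) +
      (α - m) / (m + 1) * (exp (-(α + 1) * x) * (1 / cosh x) ^ (m + 1))) = 1 / (m + 1) := by
  have hint := (integrableOn_exp_mul_inv_cosh_pow_Ioi hα (m + 2)).add
    ((integrableOn_exp_mul_inv_cosh_pow_Ioi (by linarith : 0 < α + 1) (m + 1)).const_mul
      ((α - m) / (m + 1)))
  have hcont : Continuous fun x => -(1 / (m + 1 : ℝ)) * (exp (-(α + 1) * x) / cosh x ^ (m + 1)) :=
    continuous_const.mul ((by fun_prop : Continuous fun x => exp (-(α + 1) * x)).div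
      (by fun_prop) fun x => by positivity)
  rw [integral_Ioi_of_hasDerivAt_of_tendsto hcont.continuousWithinAt
    (fun x _ => hasDerivAt_exp_mul_inv_cosh_pow α m x) hint
    (tendsto_exp_mul_inv_cosh_pow_atTop (by linarith) m)]
  simp

lemma integral_exp_abs_mul_inv_cosh_pow_combination {α : ℝ} (hα : 0 < α) {k : ℕ} (hk : 1 ≤ k) :
    (∫ x : ℝ, exp (-α * |x|) * (1 / cosh x) ^ (k + 1)) +
      (α - ((k : ℝ) - 1)) / k * ∫ x : ℝ, exp (-(α + 1) * |x|) * (1 / cosh x) ^ k = 2 * (1 / k) := by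
  obtain ⟨m, rfl⟩ := Nat.exists_eq_add_of_le' hk
  have key := integral_Ioi_exp_mul_inv_cosh_pow_combination hα m
  rw [integral_add (integrableOn_exp_mul_inv_cosh_pow_Ioi hα (m + 2))
    ((integrableOn_exp_mul_inv_cosh_pow_Ioi (by linarith : 0 < α + 1) (m + 1)).const_mul _),
    integral_const_mul] at key
  rw [integral_exp_abs_mul_inv_cosh_pow, integral_exp_abs_mul_inv_cosh_pow]
  push_cast
  linear_combination 2 * key

theorem harmonic_number_as_sum_of_integrals_general
    (α : ℝ) (hα : 0 < α) (n : ℕ) :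
    (∑ k ∈ Finset.Icc 1 n, (1 : ℝ) / k) =
      (1 / 2) * ∑ k ∈ Finset.Icc 1 n,
        ((∫ x : ℝ, Real.exp (-α * |x|) * (1 / Real.cosh x) ^ (k + 1)) +
          ((α - ((k : ℝ) - 1)) / k) *
            ∫ x : ℝ, Real.exp (-(α + 1) * |x|) * (1 / Real.cosh x) ^ k) := by
  rw [Finset.sum_congr rfl fun k hk =>
    integral_exp_abs_mul_inv_cosh_pow_combination hα (Finset.mem_Icc.mp hk).1, ← Finset.mul_sum]
  ring

theorem harmonic_number_as_sum_of_integrals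
    (α : ℝ) (hα : 0 < α) (n : ℕ) (hn : 1 ≤ n) :
    (∑ k ∈ Finset.Icc 1 n, (1 : ℝ) / k) =
      (1 / 2) * ∑ k ∈ Finset.Icc 1 n,
        ((∫ x : ℝ, Real.exp (-α * |x|) * (1 / Real.cosh x) ^ (k + 1)) +
          ((α - ((k : ℝ) - 1)) / k) *
            ∫ x : ℝ, Real.exp (-(α + 1) * |x|) * (1 / Real.cosh x) ^ k) :=
  harmonic_number_as_sum_of_integrals_general α hα n
end

section
/- For every real number α > 0 and every natural number n ≥ 1, the n-th harmonic number H_n = Σ_{k=1}^n 1/k satisfies H_n = Σ_{k=1}^n ( I_{k+1} + ((α - (k-1))/k) · J_k ), where I_{k+1} = ∫_{0}^{∞} e^{-αx} sech^{k+1}(x) dx and J_k = ∫_{0}^{∞} e^{-(α+1)x} sech^{k}(x) dx. -/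
/-! Writing `sinh = exp - cosh`, the derivative of `e^{-(α+1)x} sech^k x` is
`(k - α - 1) e^{-(α+1)x} sech^k x - k e^{-αx} sech^{k+1} x`. Integrating over `(0, ∞)`, where the
function falls from `1` to `0`, gives `k I_{k+1} + (α + 1 - k) J_k = 1`, i.e. each summand equals
`1/k`. -/

open MeasureTheory Real Filter Topology Set

lemma one_div_cosh_pow_nonneg (x : ℝ) (m : ℕ) : 0 ≤ (1 / cosh x) ^ m := by
  have := cosh_pos x
  positivity

lemma one_div_cosh_pow_le_one (x : ℝ) (m : ℕ) : (1 / cosh x) ^ m ≤ 1 :=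
  pow_le_one₀ (by have := cosh_pos x; positivity) ((div_le_one (cosh_pos x)).2 (one_le_cosh x))

lemma exp_mul_one_div_cosh_pow_le (β x : ℝ) (m : ℕ) :
    exp (-β * x) * (1 / cosh x) ^ m ≤ exp (-β * x) :=
  mul_le_of_le_one_right (exp_pos _).le (one_div_cosh_pow_le_one x m)

lemma continuous_one_div_cosh_pow (m : ℕ) : Continuous fun x => (1 / cosh x) ^ m :=
  (continuous_const.div continuous_cosh fun x => (cosh_pos x).ne').pow m

lemma integrableOn_exp_mul_one_div_cosh_pow_Ioi {β : ℝ} (hβ : 0 < β) (m : ℕ) :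
    IntegrableOn (fun x => exp (-β * x) * (1 / cosh x) ^ m) (Ioi 0) := by
  refine (exp_neg_integrableOn_Ioi 0 hβ).mono' ?_ (Eventually.of_forall fun x => ?_)
  · exact ((continuous_exp.comp (continuous_const_mul _)).mul
      (continuous_one_div_cosh_pow m)).aestronglyMeasurable
  · rw [norm_of_nonneg (mul_nonneg (exp_pos _).le (one_div_cosh_pow_nonneg x m))]
    exact exp_mul_one_div_cosh_pow_le β x m

lemma tendsto_exp_mul_one_div_cosh_pow_atTop {β : ℝ} (hβ : 0 < β) (m : ℕ) :
    Tendsto (fun x => exp (-β * x) * (1 / cosh x) ^ m) atTop (𝓝 0) := by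
  have hexp : Tendsto (fun x => exp (-β * x)) atTop (𝓝 0) :=
    tendsto_exp_atBot.comp (tendsto_id.const_mul_atTop_of_neg (neg_neg_of_pos hβ))
  exact squeeze_zero
    (fun x => mul_nonneg (exp_pos _).le (one_div_cosh_pow_nonneg x m))
    (fun x => exp_mul_one_div_cosh_pow_le β x m) hexp

lemma hasDerivAt_one_div_cosh (x : ℝ) :
    HasDerivAt (fun y => 1 / cosh y) (1 / cosh x - exp x * (1 / cosh x) ^ 2) x := by
  have hc := (cosh_pos x).ne'
  have h := (hasDerivAt_cosh x).inv hc
  simp only [inv_eq_one_div] at h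
  refine h.congr_deriv ?_
  rw [← cosh_add_sinh x]
  field_simp
  ring

lemma hasDerivAt_one_div_cosh_pow (m : ℕ) (x : ℝ) :
    HasDerivAt (fun y => (1 / cosh y) ^ m)
      (m * ((1 / cosh x) ^ m - exp x * (1 / cosh x) ^ (m + 1))) x := by
  refine ((hasDerivAt_one_div_cosh x).fun_pow m).congr_deriv ?_
  cases m with
  | zero => simp
  | succ j =>
    simp only [Nat.cast_add, Nat.cast_one, Nat.add_sub_cancel]
    ring

lemma hasDerivAt_exp_mul_one_div_cosh_pow (α : ℝ) (k : ℕ) (x : ℝ) :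
    HasDerivAt (fun y => exp (-(α + 1) * y) * (1 / cosh y) ^ k)
      ((k - α - 1) * (exp (-(α + 1) * x) * (1 / cosh x) ^ k)
        - k * (exp (-α * x) * (1 / cosh x) ^ (k + 1))) x := by
  have hexp : HasDerivAt (fun y => exp (-(α + 1) * y)) (exp (-(α + 1) * x) * -(α + 1)) x := by
    simpa using ((hasDerivAt_id x).const_mul (-(α + 1))).exp
  have hshift : exp (-α * x) = exp (-(α + 1) * x) * exp x := by
    rw [← exp_add]
    ring_nf
  refine (hexp.mul (hasDerivAt_one_div_cosh_pow k x)).congr_deriv ?_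
  rw [hshift]
  ring

lemma mul_integral_exp_mul_one_div_cosh_pow_add {α : ℝ} (hα : 0 < α) (k : ℕ) :
    k * (∫ x in Ioi (0 : ℝ), exp (-α * x) * (1 / cosh x) ^ (k + 1)) +
      (α + 1 - k) * ∫ x in Ioi (0 : ℝ), exp (-(α + 1) * x) * (1 / cosh x) ^ k = 1 := by
  have hI := integrableOn_exp_mul_one_div_cosh_pow_Ioi hα (k + 1)
  have hJ := integrableOn_exp_mul_one_div_cosh_pow_Ioi (by linarith : 0 < α + 1) k
  have hFTC := integral_Ioi_of_hasDerivAt_of_tendsto'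
    (fun x _ => hasDerivAt_exp_mul_one_div_cosh_pow α k x)
    ((hJ.const_mul _).sub (hI.const_mul _))
    (tendsto_exp_mul_one_div_cosh_pow_atTop (by linarith : 0 < α + 1) k)
  rw [integral_sub (hJ.const_mul _) (hI.const_mul _), integral_const_mul, integral_const_mul]
    at hFTC
  simp only [mul_zero, exp_zero, cosh_zero, div_one, one_pow, mul_one] at hFTC
  linear_combination -hFTC

theorem harmonic_number_as_sum_of_half_line_integrals_general
    (α : ℝ) (hα : 0 < α) (n : ℕ) :
    (∑ k ∈ Finset.Icc 1 n, (1 : ℝ) / k) =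
      ∑ k ∈ Finset.Icc 1 n,
        ((∫ x in Set.Ioi (0 : ℝ), Real.exp (-α * x) * (1 / Real.cosh x) ^ (k + 1)) +
          ((α - ((k : ℝ) - 1)) / k) *
            ∫ x in Set.Ioi (0 : ℝ), Real.exp (-(α + 1) * x) * (1 / Real.cosh x) ^ k) := by
  refine Finset.sum_congr rfl fun k hmem => ?_
  have hk : (k : ℝ) ≠ 0 := Nat.cast_ne_zero.2 (by grind [Finset.mem_Icc.1 hmem])
  have solve : ∀ I J : ℝ, k * I + (α + 1 - k) * J = 1 → 1 / k = I + (α - (k - 1)) / k * J := by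
    intro I J h
    field_simp
    linear_combination -h
  exact solve _ _ (mul_integral_exp_mul_one_div_cosh_pow_add hα k)

theorem harmonic_number_as_sum_of_half_line_integrals
    (α : ℝ) (hα : 0 < α) (n : ℕ) (hn : 1 ≤ n) :
    (∑ k ∈ Finset.Icc 1 n, (1 : ℝ) / k) =
      ∑ k ∈ Finset.Icc 1 n,
        ((∫ x in Set.Ioi (0 : ℝ), Real.exp (-α * x) * (1 / Real.cosh x) ^ (k + 1)) +
          ((α - ((k : ℝ) - 1)) / k) *
            ∫ x in Set.Ioi (0 : ℝ), Real.exp (-(α + 1) * x) * (1 / Real.cosh x) ^ k) :=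
  harmonic_number_as_sum_of_half_line_integrals_general α hα n
end
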